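/- Let T be the operator on bounded continuous functions on (-η, ∞) defined by (Tg)(x) = 1 + ∫_{-η}^∞ g(y) φ_β(y) (1/√(1-α²)) f((y - αx)/√(1-α²)) dy, where φ_β is measurable with 0 ≤ φ_β ≤ 1 and φ_β(y) = e^{-βy} for y > 1, β > 0, 0 ≤ α < 1, η > 0. Then there exists a constant C = C(α,η,β) < 1 such that ‖Tg₁ - Tg₂‖_∞ ≤ C‖g₁ - g₂‖_∞ for all bounded continuous g₁, g₂; in particular T has a unique fixed point in the ball of radius 1/(1-C). -/

import Mathlib

open MeasureTheory Real Set BoundedContinuousFunction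

noncomputable def gpdf (x : ℝ) : ℝ := (Real.sqrt (2 * Real.pi))⁻¹ * Real.exp (-x ^ 2 / 2)

open ProbabilityTheory NNReal

lemma gpdf_pos (x : ℝ) : 0 < gpdf x := by
  unfold gpdf
  positivity

lemma gpdf_anti {a b : ℝ} (h : |a| ≤ |b|) : gpdf b ≤ gpdf a := by
  have h2 : a ^ 2 ≤ b ^ 2 := by
    rw [← sq_abs a, ← sq_abs b]
    exact pow_le_pow_left₀ (abs_nonneg a) h 2
  unfold gpdf
  have h3 : (0:ℝ) ≤ (Real.sqrt (2 * Real.pi))⁻¹ := by positivity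
  exact mul_le_mul_of_nonneg_left (Real.exp_le_exp.2 (by linarith)) h3

lemma gpdf_eq {v : ℝ≥0} (hv : 0 < (v:ℝ)) (m y : ℝ) :
    (Real.sqrt v)⁻¹ * gpdf ((y - m) / Real.sqrt v) = gaussianPDFReal m v y := by
  unfold gpdf gaussianPDFReal
  rw [div_pow, Real.sq_sqrt hv.le, Real.sqrt_mul (by positivity : (0:ℝ) ≤ 2 * Real.pi)]
  rw [mul_inv]
  have : -((y - m) ^ 2 / (v:ℝ)) / 2 = -(y - m) ^ 2 / (2 * v) := by ring
  rw [this]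
  ring

lemma mass_Icc {v : ℝ≥0} (hv : 0 < (v:ℝ)) (m a r : ℝ)
    (hr : ∀ y ∈ Icc a (a+1), |y - m| ≤ r) :
    (Real.sqrt v)⁻¹ * gpdf (r / Real.sqrt v) ≤ ∫ y in Icc a (a+1), gaussianPDFReal m v y := by
  have hs : 0 < Real.sqrt v := Real.sqrt_pos.2 hv
  have h0r : 0 ≤ r := le_trans (abs_nonneg _) (hr a ⟨le_refl a, by linarith⟩)
  have hconst : ∫ _ in Icc a (a+1), ((Real.sqrt v)⁻¹ * gpdf (r / Real.sqrt v)) ∂(volume : Measure ℝ)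
      = (Real.sqrt v)⁻¹ * gpdf (r / Real.sqrt v) := by
    rw [setIntegral_const, measureReal_def, Real.volume_Icc, show a + 1 - a = 1 by ring]
    simp
  rw [← hconst]
  refine setIntegral_mono_on ?_ ?_ measurableSet_Icc ?_
  · exact integrableOn_const (by rw [Real.volume_Icc]; exact ENNReal.ofReal_ne_top)
  · exact (integrable_gaussianPDFReal m v).integrableOn
  · intro y hy
    rw [← gpdf_eq hv m y]
    refine mul_le_mul_of_nonneg_left (gpdf_anti ?_) (by positivity)
    rw [abs_div, abs_div, abs_of_nonneg hs.le, abs_of_nonneg h0r]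
    exact div_le_div_of_nonneg_right (hr y hy) hs.le

lemma exp_shift_ineq (vr : ℝ) (hv : 0 < vr) (u d : ℝ) (hd : d^2 ≤ 1) :
    -(u - d)^2/(2*vr) ≤ vr⁻¹ + -((4*vr)⁻¹) * u^2 := by
  have hkey : u^2/2 - 2 ≤ (u - d)^2 := by nlinarith [sq_nonneg (u - 2*d)]
  calc -(u-d)^2/(2*vr) = (-(u-d)^2/2) * vr⁻¹ := by ring
    _ ≤ (1 + -(u^2/4)) * vr⁻¹ := by
        refine mul_le_mul_of_nonneg_right (by nlinarith) (by positivity)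
    _ = vr⁻¹ + -((4*vr)⁻¹) * u^2 := by ring

lemma key_bound (η β : ℝ) (hη : 0 < η) (hβ : 0 < β)
    (φ : ℝ → ℝ) (hφm : Measurable φ) (hφ0 : ∀ y, 0 ≤ φ y) (hφ1 : ∀ y, φ y ≤ 1)
    (hφexp : ∀ y, 1 < y → φ y = Real.exp (-β * y))
    (v : ℝ≥0) (hv : 0 < (v:ℝ)) :
    ∃ C : ℝ, 1/2 ≤ C ∧ C < 1 ∧ ∀ m : ℝ,
      ∫ y in Ioi (-η), φ y * gaussianPDFReal m v y ≤ C := by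
  have hvne : v ≠ 0 := by
    intro h; rw [h] at hv; simp at hv
  set s : ℝ := Real.sqrt v with hsdef
  have hs : 0 < s := Real.sqrt_pos.2 hv
  -- regime C threshold from a limit argument
  have hA1 : Filter.Tendsto (fun m : ℝ => Real.sqrt 2 * Real.exp (-(m/2)^2/(4*(v:ℝ)))) Filter.atTop (nhds 0) := by
    have h1 : Filter.Tendsto (fun m : ℝ => -(m/2)^2/(4*(v:ℝ))) Filter.atTop Filter.atBot := by
      have h2 : Filter.Tendsto (fun m : ℝ => (16*(v:ℝ))⁻¹ * m^2) Filter.atTop Filter.atTop :=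
        (Filter.tendsto_pow_atTop (by norm_num : 2 ≠ 0)).const_mul_atTop (by positivity)
      have h3 : Filter.Tendsto (fun m : ℝ => -((16*(v:ℝ))⁻¹ * m^2)) Filter.atTop Filter.atBot :=
        Filter.tendsto_neg_atTop_atBot.comp h2
      refine h3.congr (fun m => ?_)
      show -((16*(v:ℝ))⁻¹ * m^2) = -(m/2)^2/(4*(v:ℝ))
      rw [mul_comm, div_eq_mul_inv, div_eq_mul_inv,
        show (16*(v:ℝ)) = 4*(4*(v:ℝ)) by ring, mul_inv]
      ring_nf
    have := Real.tendsto_exp_atBot.comp h1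
    simpa using (this.const_mul (Real.sqrt 2))
  have hA2 : Filter.Tendsto (fun m : ℝ => Real.exp (-β*(m/2))) Filter.atTop (nhds 0) := by
    apply Real.tendsto_exp_atBot.comp
    have h2 : Filter.Tendsto (fun m : ℝ => (β/2) * m) Filter.atTop Filter.atTop :=
      Filter.Tendsto.const_mul_atTop (by positivity) Filter.tendsto_id
    have h3 := Filter.tendsto_neg_atTop_atBot.comp h2
    refine h3.congr (fun m => ?_)
    show -(β/2*m) = -β*(m/2)
    ring
  have hsum : Filter.Tendsto
      (fun m : ℝ => Real.sqrt 2 * Real.exp (-(m/2)^2/(4*(v:ℝ))) + Real.exp (-β*(m/2)))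
      Filter.atTop (nhds 0) := by
    simpa using hA1.add hA2
  obtain ⟨M₀, hM₀⟩ := (Filter.eventually_atTop.1
    (hsum.eventually (gt_mem_nhds (by norm_num : (0:ℝ) < 1/2))))
  set M : ℝ := max 2 M₀ with hMdef
  have hM2 : (2:ℝ) ≤ M := le_max_left _ _
  set R : ℝ := 3 + η + M with hRdef
  have hR1 : (1:ℝ) ≤ R := by
    have := hη; simp only [hRdef]; linarith
  set ε : ℝ := 1 - Real.exp (-β*2) with hεdef
  have hε0 : 0 < ε := by
    have : Real.exp (-β*2) < 1 := Real.exp_lt_one_iff.2 (by nlinarith)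
    simp only [hεdef]; linarith
  have hε1 : ε ≤ 1 := by
    have : 0 < Real.exp (-β*2) := Real.exp_pos _
    simp only [hεdef]; linarith
  set δ : ℝ := s⁻¹ * gpdf (R / s) with hδdef
  have hδ0 : 0 < δ := by
    have := gpdf_pos (R / s); positivity
  have hM₀M : M₀ ≤ M := by rw [hMdef]; exact le_max_right 2 M₀
  clear_value s M R ε δ
  refine ⟨max (1/2) (1 - ε*δ), le_max_left _ _, ?_, ?_⟩
  · exact max_lt (by norm_num) (by nlinarith)
  intro m
  have hKint : Integrable (gaussianPDFReal m v) := integrable_gaussianPDFReal m v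
  have hK1 : ∫ y, gaussianPDFReal m v y = 1 := integral_gaussianPDFReal_eq_one m hvne
  have hK0 : ∀ y, 0 ≤ gaussianPDFReal m v y := gaussianPDFReal_nonneg m v
  have hφKint : Integrable (fun y => φ y * gaussianPDFReal m v y) := by
    refine hKint.mono ((hφm.mul (measurable_gaussianPDFReal m v)).aestronglyMeasurable) ?_
    refine Filter.Eventually.of_forall (fun y => ?_)
    rw [Real.norm_eq_abs, Real.norm_eq_abs, abs_of_nonneg (mul_nonneg (hφ0 y) (hK0 y)),
      abs_of_nonneg (hK0 y)]
    exact mul_le_of_le_one_left (hK0 y) (hφ1 y)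
  have h1φKint : Integrable (fun y => (1 - φ y) * gaussianPDFReal m v y) := by
    refine hKint.mono (((measurable_const.sub hφm).mul
      (measurable_gaussianPDFReal m v)).aestronglyMeasurable) ?_
    refine Filter.Eventually.of_forall (fun y => ?_)
    rw [Real.norm_eq_abs, Real.norm_eq_abs,
      abs_of_nonneg (mul_nonneg (by linarith [hφ1 y]) (hK0 y)), abs_of_nonneg (hK0 y)]
    exact mul_le_of_le_one_left (hK0 y) (by linarith [hφ0 y])
  -- trivial comparison used repeatedly
  have hφK_le_K : ∀ t : Set ℝ, MeasurableSet t →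
      ∫ y in t, φ y * gaussianPDFReal m v y ≤ ∫ y in t, gaussianPDFReal m v y := by
    intro t ht
    exact setIntegral_mono_on hφKint.integrableOn hKint.integrableOn ht
      (fun y _ => mul_le_of_le_one_left (hK0 y) (hφ1 y))
  rcases le_or_gt m (-η) with hm | hm
  · -- Regime A : m ≤ -η
    have hsplit : (∫ y in Iic (-η), gaussianPDFReal m v y)
        + ∫ y in Ioi (-η), gaussianPDFReal m v y = 1 := by
      rw [← setIntegral_union (Iic_disjoint_Ioi le_rfl) measurableSet_Ioi
        hKint.integrableOn hKint.integrableOn, Iic_union_Ioi, setIntegral_univ, hK1]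
    have hmass : s⁻¹ * gpdf (1 / s) ≤ ∫ y in Iic (-η), gaussianPDFReal m v y := by
      rw [hsdef]
      refine le_trans (mass_Icc hv m (m-1) 1 ?_) ?_
      · intro y hy
        rw [abs_le]; constructor <;> [linarith [hy.1]; linarith [hy.2]]
      · refine setIntegral_mono_set hKint.integrableOn
          (Filter.Eventually.of_forall hK0) (HasSubset.Subset.eventuallyLE ?_)
        intro y hy
        exact le_trans hy.2 (by linarith)
    have hδ1 : ε * δ ≤ s⁻¹ * gpdf (1 / s) := by
      have hg : gpdf (R / s) ≤ gpdf (1 / s) := by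
        refine gpdf_anti ?_
        rw [abs_div, abs_div, abs_of_nonneg hs.le]
        refine div_le_div_of_nonneg_right ?_ hs.le
        rw [abs_one, abs_of_nonneg (by linarith : (0:ℝ) ≤ R)]; exact hR1
      calc ε * δ ≤ 1 * δ := mul_le_mul_of_nonneg_right hε1 hδ0.le
        _ = δ := one_mul δ
        _ ≤ s⁻¹ * gpdf (1 / s) := by
          rw [hδdef]
          exact mul_le_mul_of_nonneg_left hg (inv_nonneg.2 hs.le)
    refine le_trans (hφK_le_K _ measurableSet_Ioi) (le_trans ?_ (le_max_right _ _))
    linarith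
  rcases le_or_gt m M with hmM | hmM
  · -- Regime B : -η < m ≤ M
    have hsub : ∫ y in Ioi (-η), φ y * gaussianPDFReal m v y
        = (∫ y in Ioi (-η), gaussianPDFReal m v y)
          - ∫ y in Ioi (-η), (1 - φ y) * gaussianPDFReal m v y := by
      rw [← integral_sub hKint.integrableOn h1φKint.integrableOn]
      exact setIntegral_congr_fun measurableSet_Ioi (fun y _ => by ring)
    have hub : ∫ y in Ioi (-η), gaussianPDFReal m v y ≤ 1 := by
      rw [← hK1]
      exact setIntegral_le_integral hKint (Filter.Eventually.of_forall hK0)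
    have hlb : ε * δ ≤ ∫ y in Ioi (-η), (1 - φ y) * gaussianPDFReal m v y := by
      have hsub23 : Icc (2:ℝ) (2+1) ⊆ Ioi (-η) := by
        intro y hy
        have := hy.1; simp only [mem_Ioi]; linarith
      have step1 : ε * δ ≤ ∫ y in Icc (2:ℝ) (2+1), ε * gaussianPDFReal m v y := by
        rw [integral_const_mul]
        refine mul_le_mul_of_nonneg_left ?_ hε0.le
        refine le_trans ?_ (mass_Icc hv m 2 R ?_)
        · rw [hδdef, hsdef]
        · intro y hy
          rw [abs_le]
          constructor
          · simp only [hRdef]; linarith [hy.1]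
          · simp only [hRdef]; linarith [hy.2, hη]
      have step2 : ∫ y in Icc (2:ℝ) (2+1), ε * gaussianPDFReal m v y
          ≤ ∫ y in Icc (2:ℝ) (2+1), (1 - φ y) * gaussianPDFReal m v y := by
        refine setIntegral_mono_on (hKint.const_mul ε).integrableOn h1φKint.integrableOn
          measurableSet_Icc ?_
        intro y hy
        refine mul_le_mul_of_nonneg_right ?_ (hK0 y)
        have hφy : φ y = Real.exp (-β * y) := hφexp y (by linarith [hy.1])
        have : Real.exp (-β * y) ≤ Real.exp (-β * 2) := by
          refine Real.exp_le_exp.2 ?_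
          nlinarith [hy.1]
        simp only [hεdef]
        rw [hφy]
        linarith
      have step3 : ∫ y in Icc (2:ℝ) (2+1), (1 - φ y) * gaussianPDFReal m v y
          ≤ ∫ y in Ioi (-η), (1 - φ y) * gaussianPDFReal m v y := by
        refine setIntegral_mono_set h1φKint.integrableOn
          (Filter.Eventually.of_forall (fun y => mul_nonneg (by linarith [hφ1 y]) (hK0 y)))
          (HasSubset.Subset.eventuallyLE hsub23)
      linarith
    rw [hsub]
    refine le_trans ?_ (le_max_right _ _)
    linarith
  · -- Regime C : m > M ≥ 2
    have hm2 : (2:ℝ) ≤ m := le_trans hM2 hmM.le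
    have hsplit : ∫ y in Ioi (-η), φ y * gaussianPDFReal m v y
        = (∫ y in Ioc (-η) (m/2), φ y * gaussianPDFReal m v y)
          + ∫ y in Ioi (m/2), φ y * gaussianPDFReal m v y := by
      rw [← Ioc_union_Ioi_eq_Ioi (by linarith : -η ≤ m/2),
        setIntegral_union Ioc_disjoint_Ioi_same measurableSet_Ioi
        hφKint.integrableOn hφKint.integrableOn]
    have hterm1 : ∫ y in Ioc (-η) (m/2), φ y * gaussianPDFReal m v y
        ≤ Real.sqrt 2 * Real.exp (-(m/2)^2/(4*(v:ℝ))) := by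
      have ha : ∫ y in Ioc (-η) (m/2), φ y * gaussianPDFReal m v y
          ≤ ∫ y in Iic (m/2), gaussianPDFReal m v y := by
        refine le_trans (hφK_le_K _ measurableSet_Ioc) ?_
        exact setIntegral_mono_set hKint.integrableOn
          (Filter.Eventually.of_forall hK0)
          (HasSubset.Subset.eventuallyLE Ioc_subset_Iic_self)
      refine le_trans ha ?_
      -- compare with a wider gaussian
      set B : ℝ → ℝ := fun y =>
        Real.exp (-(m/2)^2/(4*(v:ℝ))) * (Real.sqrt 2 * gaussianPDFReal m (2*v) y) with hBdef
      have hBint : Integrable B := by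
        exact ((integrable_gaussianPDFReal m (2*v)).const_mul _).const_mul _
      have hBpt : ∀ y ∈ Iic (m/2), gaussianPDFReal m v y ≤ B y := by
        intro y hy
        simp only [hBdef]
        unfold gaussianPDFReal
        push_cast
        rw [show 2 * Real.pi * (2*(v:ℝ)) = 2 * (2 * Real.pi * (v:ℝ)) by ring,
          Real.sqrt_mul (by norm_num : (0:ℝ) ≤ 2)]
        have hsqrt2 : Real.sqrt 2 ≠ 0 := by positivity
        rw [mul_inv]
        have hrw : Real.exp (-(m/2)^2/(4*(v:ℝ))) *
            (Real.sqrt 2 * ((Real.sqrt 2)⁻¹ * (Real.sqrt (2*Real.pi*(v:ℝ)))⁻¹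
              * Real.exp (-(y-m)^2/(2*(2*(v:ℝ)))))) =
            (Real.sqrt (2*Real.pi*(v:ℝ)))⁻¹ *
              (Real.exp (-(m/2)^2/(4*(v:ℝ))) * Real.exp (-(y-m)^2/(2*(2*(v:ℝ))))) := by
          field_simp
        rw [hrw, ← Real.exp_add]
        refine mul_le_mul_of_nonneg_left ?_ (by positivity)
        refine Real.exp_le_exp.2 ?_
        have hkey : (m/2)^2 ≤ (y-m)^2 := by
          have hy' : y ≤ m/2 := hy
          nlinarith
        have hv' : (0:ℝ) ≤ (v:ℝ)⁻¹ := by positivity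
        calc -(y-m)^2/(2*(v:ℝ)) = (-(y-m)^2/2) * (v:ℝ)⁻¹ := by ring
          _ ≤ (-(m/2)^2/4 + -(y-m)^2/4) * (v:ℝ)⁻¹ := by
              refine mul_le_mul_of_nonneg_right (by nlinarith) hv'
          _ = -(m/2)^2/(4*(v:ℝ)) + -(y-m)^2/(2*(2*(v:ℝ))) := by ring
      have hBval : ∫ y, B y = Real.exp (-(m/2)^2/(4*(v:ℝ))) * Real.sqrt 2 := by
        simp only [hBdef]
        rw [integral_const_mul, integral_const_mul,
          integral_gaussianPDFReal_eq_one m (by simp [hvne] : (2*v : ℝ≥0) ≠ 0)]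
        ring
      calc ∫ y in Iic (m/2), gaussianPDFReal m v y ≤ ∫ y in Iic (m/2), B y :=
            setIntegral_mono_on hKint.integrableOn hBint.integrableOn
              measurableSet_Iic hBpt
        _ ≤ ∫ y, B y := setIntegral_le_integral hBint
            (Filter.Eventually.of_forall (fun y =>
              mul_nonneg (Real.exp_nonneg _) (mul_nonneg (Real.sqrt_nonneg _)
                (gaussianPDFReal_nonneg _ _ _))))
        _ = Real.sqrt 2 * Real.exp (-(m/2)^2/(4*(v:ℝ))) := by rw [hBval]; ring
    have hterm2 : ∫ y in Ioi (m/2), φ y * gaussianPDFReal m v y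
        ≤ Real.exp (-β*(m/2)) := by
      have ha : ∫ y in Ioi (m/2), φ y * gaussianPDFReal m v y
          ≤ ∫ y in Ioi (m/2), Real.exp (-β*(m/2)) * gaussianPDFReal m v y := by
        refine setIntegral_mono_on hφKint.integrableOn
          (hKint.const_mul _).integrableOn measurableSet_Ioi ?_
        intro y hy
        refine mul_le_mul_of_nonneg_right ?_ (hK0 y)
        rw [hφexp y (by simp only [mem_Ioi] at hy; linarith)]
        refine Real.exp_le_exp.2 ?_
        simp only [mem_Ioi] at hy
        nlinarith
      refine le_trans ha ?_
      rw [integral_const_mul]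
      calc Real.exp (-β*(m/2)) * ∫ y in Ioi (m/2), gaussianPDFReal m v y
          ≤ Real.exp (-β*(m/2)) * 1 := by
            refine mul_le_mul_of_nonneg_left ?_ (Real.exp_nonneg _)
            rw [← hK1]
            exact setIntegral_le_integral hKint (Filter.Eventually.of_forall hK0)
        _ = Real.exp (-β*(m/2)) := mul_one _
    rw [hsplit]
    refine le_trans ?_ (le_max_left _ _)
    have := hM₀ m (le_trans hM₀M hmM.le)
    linarith

/-- the damped survival-time operator
(Tg)(x) = 1 + ∫_{-η}^∞ g(y) φ_β(y) (1/√(1-α²)) f((y-αx)/√(1-α²)) dy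
is a contraction with constant C < 1 on bounded continuous functions, and has a
unique fixed point in the ball of radius 1/(1-C). -/
theorem damped_operator_contraction
    (α η β : ℝ) (hα0 : 0 ≤ α) (hα1 : α < 1) (hη : 0 < η) (hβ : 0 < β)
    (φ : ℝ → ℝ) (hφm : Measurable φ) (hφ0 : ∀ y, 0 ≤ φ y) (hφ1 : ∀ y, φ y ≤ 1)
    (hφexp : ∀ y, 1 < y → φ y = Real.exp (-β * y))
    (T : (ℝ →ᵇ ℝ) → ℝ → ℝ)
    (hT : ∀ g : ℝ →ᵇ ℝ, ∀ x : ℝ,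
      T g x = 1 + ∫ y in Set.Ioi (-η),
        g y * φ y * ((Real.sqrt (1 - α ^ 2))⁻¹ *
          gpdf ((y - α * x) / Real.sqrt (1 - α ^ 2)))) :
    ∃ C : ℝ, 0 ≤ C ∧ C < 1 ∧
      (∀ g₁ g₂ : ℝ →ᵇ ℝ, ∀ x : ℝ, |T g₁ x - T g₂ x| ≤ C * ‖g₁ - g₂‖) ∧
      (∃! g : ℝ →ᵇ ℝ, ‖g‖ ≤ 1 / (1 - C) ∧ ∀ x, g x = T g x) := by
  have hα2 : α^2 < 1 := by nlinarith
  set v : ℝ≥0 := ⟨1 - α^2, by linarith⟩ with hvdef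
  have hvc : (v:ℝ) = 1 - α^2 := rfl
  have hv : 0 < (v:ℝ) := by rw [hvc]; linarith
  have hker : ∀ x y : ℝ, (Real.sqrt (1-α^2))⁻¹ * gpdf ((y - α*x)/Real.sqrt (1-α^2))
      = gaussianPDFReal (α*x) v y := by
    intro x y
    rw [← gpdf_eq hv (α*x) y, hvc]
  have hT' : ∀ (g : ℝ →ᵇ ℝ) (x : ℝ), T g x
      = 1 + ∫ y in Ioi (-η), g y * φ y * gaussianPDFReal (α*x) v y := by
    intro g x
    rw [hT g x]
    congr 1
    refine setIntegral_congr_fun measurableSet_Ioi (fun y _ => ?_)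
    rw [hker x y]
  obtain ⟨C, hC12, hC1, hCkey⟩ := key_bound η β hη hβ φ hφm hφ0 hφ1 hφexp v hv
  have hC0 : (0:ℝ) ≤ C := le_trans (by norm_num) hC12
  -- generic integrability
  have hint : ∀ (b : ℝ → ℝ), Measurable b → ∀ (c : ℝ), (∀ y, |b y| ≤ c) → ∀ x : ℝ,
      Integrable (fun y => b y * φ y * gaussianPDFReal (α*x) v y) := by
    intro b hb c hc x
    refine ((integrable_gaussianPDFReal (α*x) v).const_mul c).mono
      (((hb.mul hφm).mul (measurable_gaussianPDFReal _ _)).aestronglyMeasurable)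
      (Filter.Eventually.of_forall fun y => ?_)
    have hK0 := gaussianPDFReal_nonneg (α*x) v y
    rw [Real.norm_eq_abs, Real.norm_eq_abs, abs_mul, abs_mul,
      abs_of_nonneg (hφ0 y), abs_of_nonneg hK0]
    have h1 : |b y| * φ y ≤ c * 1 :=
      mul_le_mul (hc y) (hφ1 y) (hφ0 y) (le_trans (abs_nonneg _) (hc y))
    calc |b y| * φ y * gaussianPDFReal (α*x) v y
        ≤ (c*1) * gaussianPDFReal (α*x) v y := mul_le_mul_of_nonneg_right h1 hK0
      _ = c * gaussianPDFReal (α*x) v y := by ring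
      _ ≤ |c * gaussianPDFReal (α*x) v y| := le_abs_self _
  -- contraction estimate
  have hcontr : ∀ g₁ g₂ : ℝ →ᵇ ℝ, ∀ x : ℝ, |T g₁ x - T g₂ x| ≤ C * ‖g₁ - g₂‖ := by
    intro g₁ g₂ x
    have hb1 : ∀ y : ℝ, |g₁ y| ≤ ‖g₁‖ := fun y => by
      simpa [Real.norm_eq_abs] using g₁.norm_coe_le_norm y
    have hb2 : ∀ y : ℝ, |g₂ y| ≤ ‖g₂‖ := fun y => by
      simpa [Real.norm_eq_abs] using g₂.norm_coe_le_norm y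
    have hbd : ∀ y : ℝ, |g₁ y - g₂ y| ≤ ‖g₁ - g₂‖ := fun y => by
      simpa [Real.norm_eq_abs] using (g₁ - g₂).norm_coe_le_norm y
    have hi1 := (hint g₁ g₁.continuous.measurable ‖g₁‖ hb1 x).integrableOn
      (s := Ioi (-η))
    have hi2 := (hint g₂ g₂.continuous.measurable ‖g₂‖ hb2 x).integrableOn
      (s := Ioi (-η))
    have hid := (hint (fun y => g₁ y - g₂ y)
      (g₁.continuous.measurable.sub g₂.continuous.measurable) ‖g₁ - g₂‖ hbd x).integrableOn
      (s := Ioi (-η))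
    have hiC := (hint (fun _ => 1) measurable_const 1 (by norm_num) x).integrableOn
      (s := Ioi (-η))
    rw [hT' g₁ x, hT' g₂ x, add_sub_add_left_eq_sub, ← integral_sub hi1 hi2]
    rw [setIntegral_congr_fun measurableSet_Ioi
      (show EqOn _ (fun y => (g₁ y - g₂ y) * φ y * gaussianPDFReal (α*x) v y) (Ioi (-η))
        from fun y _ => by simp only; ring)]
    calc |∫ y in Ioi (-η), (g₁ y - g₂ y) * φ y * gaussianPDFReal (α*x) v y|
        ≤ ∫ y in Ioi (-η), |(g₁ y - g₂ y) * φ y * gaussianPDFReal (α*x) v y| := by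
          rw [← Real.norm_eq_abs]
          exact (norm_integral_le_integral_norm _).trans_eq (by simp only [Real.norm_eq_abs])
      _ ≤ ∫ y in Ioi (-η), ‖g₁ - g₂‖ * (φ y * gaussianPDFReal (α*x) v y) := by
          refine integral_mono hid.abs ?_ (fun y => ?_)
          · exact IntegrableOn.congr_fun (hiC.const_mul ‖g₁ - g₂‖)
              (fun y _ => by ring) measurableSet_Ioi
          · have hK0 := gaussianPDFReal_nonneg (α*x) v y
            rw [abs_mul, abs_mul, abs_of_nonneg (hφ0 y), abs_of_nonneg hK0]
            refine mul_le_mul_of_nonneg_right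
              (mul_le_mul_of_nonneg_right (hbd y) (hφ0 y)) hK0 |>.trans ?_
            rw [mul_assoc]
      _ = ‖g₁ - g₂‖ * ∫ y in Ioi (-η), φ y * gaussianPDFReal (α*x) v y := by
          rw [integral_const_mul]
      _ ≤ ‖g₁ - g₂‖ * C := mul_le_mul_of_nonneg_left (hCkey (α*x)) (norm_nonneg _)
      _ = C * ‖g₁ - g₂‖ := mul_comm _ _
  -- T g is continuous
  have hTcont : ∀ g : ℝ →ᵇ ℝ, Continuous (T g) := by
    intro g
    have hc : Continuous fun x => 1 + ∫ y in Ioi (-η), g y * φ y * gaussianPDFReal (α*x) v y := by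
      refine continuous_const.add ?_
      rw [continuous_iff_continuousAt]
      intro x₀
      have hb4 : (0:ℝ) < (4*(v:ℝ))⁻¹ := by positivity
      refine continuousAt_of_dominated (bound := fun y =>
        (‖g‖ * ((Real.sqrt (2*Real.pi*(v:ℝ)))⁻¹ * Real.exp ((v:ℝ)⁻¹))) *
          Real.exp (-((4*(v:ℝ))⁻¹) * (y - α*x₀)^2)) ?_ ?_ ?_ ?_
      · exact Filter.Eventually.of_forall (fun x =>
          (((g.continuous.measurable.mul hφm).mul
            (measurable_gaussianPDFReal _ _)).aestronglyMeasurable))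
      · refine Filter.eventually_of_mem (Metric.closedBall_mem_nhds x₀ one_pos)
          (fun x hx => Filter.Eventually.of_forall (fun y => ?_))
        have hxx : |x - x₀| ≤ 1 := by
          rw [← Real.dist_eq]; exact Metric.mem_closedBall.1 hx
        have hK0 := gaussianPDFReal_nonneg (α*x) v y
        rw [Real.norm_eq_abs, abs_mul, abs_mul, abs_of_nonneg (hφ0 y), abs_of_nonneg hK0]
        have h1 : |g y| * φ y ≤ ‖g‖ * 1 := by
          refine mul_le_mul ?_ (hφ1 y) (hφ0 y) (norm_nonneg g)
          simpa [Real.norm_eq_abs] using g.norm_coe_le_norm y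
        have h2 : gaussianPDFReal (α*x) v y ≤
            (Real.sqrt (2*Real.pi*(v:ℝ)))⁻¹ *
              (Real.exp ((v:ℝ)⁻¹) * Real.exp (-((4*(v:ℝ))⁻¹) * (y - α*x₀)^2)) := by
          unfold gaussianPDFReal
          rw [← Real.exp_add]
          refine mul_le_mul_of_nonneg_left (Real.exp_le_exp.2 ?_) (by positivity)
          have hud : y - α*x = (y - α*x₀) - (α*x - α*x₀) := by ring
          have hd1 : (α*x - α*x₀)^2 ≤ 1 := by
            have habs : |α*x - α*x₀| ≤ 1 := by
              rw [show α*x - α*x₀ = α*(x - x₀) by ring, abs_mul, abs_of_nonneg hα0]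
              nlinarith [abs_nonneg (x - x₀)]
            nlinarith [abs_nonneg (α*x - α*x₀), sq_abs (α*x - α*x₀)]
          rw [hud]
          exact exp_shift_ineq (v:ℝ) hv (y - α*x₀) (α*x - α*x₀) hd1
        calc |g y| * φ y * gaussianPDFReal (α*x) v y
            ≤ (‖g‖ * 1) * ((Real.sqrt (2*Real.pi*(v:ℝ)))⁻¹ *
              (Real.exp ((v:ℝ)⁻¹) * Real.exp (-((4*(v:ℝ))⁻¹) * (y - α*x₀)^2))) :=
              mul_le_mul h1 h2 hK0 (by positivity)
          _ = (‖g‖ * ((Real.sqrt (2*Real.pi*(v:ℝ)))⁻¹ * Real.exp ((v:ℝ)⁻¹))) *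
              Real.exp (-((4*(v:ℝ))⁻¹) * (y - α*x₀)^2) := by ring
      · refine Integrable.restrict ?_
        have := (integrable_exp_neg_mul_sq hb4).comp_sub_right (α*x₀)
        exact this.const_mul _
      · refine Filter.Eventually.of_forall (fun y => ?_)
        refine Continuous.continuousAt ?_
        refine (continuous_const.mul ?_)
        unfold gaussianPDFReal
        fun_prop
    exact hc.congr (fun x => (hT' g x).symm)
  -- T 0 = 1
  have hT0 : ∀ x : ℝ, T (0 : ℝ →ᵇ ℝ) x = 1 := by
    intro x
    rw [hT' 0 x]
    simp
  have hTbound : ∀ (g : ℝ →ᵇ ℝ) (x : ℝ), |T g x - 1| ≤ C * ‖g‖ := by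
    intro g x
    have h := hcontr g 0 x
    simpa [hT0 x] using h
  -- the operator as a self-map of bounded continuous functions
  set F : (ℝ →ᵇ ℝ) → (ℝ →ᵇ ℝ) := fun g =>
    BoundedContinuousFunction.mkOfBound ⟨T g, hTcont g⟩ (C*‖g‖ + C*‖g‖) (fun x y => by
      calc dist (T g x) (T g y) ≤ dist (T g x) 1 + dist 1 (T g y) := dist_triangle _ _ _
        _ ≤ C*‖g‖ + C*‖g‖ := add_le_add
            (by rw [Real.dist_eq]; exact hTbound g x)
            (by rw [dist_comm, Real.dist_eq]; exact hTbound g y)) with hFdef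
  have hFapp : ∀ (g : ℝ →ᵇ ℝ) (x : ℝ), F g x = T g x := fun g x => rfl
  have hFlip : LipschitzWith ⟨C, hC0⟩ F := by
    refine LipschitzWith.of_dist_le_mul (fun g₁ g₂ => ?_)
    have hd0 : (0:ℝ) ≤ C * dist g₁ g₂ := mul_nonneg hC0 dist_nonneg
    refine (BoundedContinuousFunction.dist_le hd0).2 (fun x => ?_)
    rw [hFapp g₁ x, hFapp g₂ x, Real.dist_eq, dist_eq_norm]
    exact hcontr g₁ g₂ x
  have hcw : ContractingWith ⟨C, hC0⟩ F := ⟨by exact_mod_cast hC1, hFlip⟩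
  refine ⟨C, hC0, hC1, hcontr, ?_⟩
  set g₀ : ℝ →ᵇ ℝ := ContractingWith.fixedPoint F hcw with hg₀def
  have hfix : F g₀ = g₀ := hcw.fixedPoint_isFixedPt
  have hg₀ : ∀ x : ℝ, g₀ x = T g₀ x := by
    intro x
    conv_lhs => rw [← hfix]
    exact hFapp g₀ x
  have h1C : (0:ℝ) < 1 - C := by linarith
  have hnorm : ‖g₀‖ ≤ 1 / (1 - C) := by
    have h2 : ‖g₀‖ ≤ 1 + C*‖g₀‖ := by
      refine (BoundedContinuousFunction.norm_le (by positivity)).2 (fun x => ?_)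
      rw [Real.norm_eq_abs, hg₀ x]
      calc |T g₀ x| = |(T g₀ x - 1) + 1| := by ring_nf
        _ ≤ |T g₀ x - 1| + |1| := abs_add_le _ _
        _ ≤ C*‖g₀‖ + 1 := by
            refine add_le_add (hTbound g₀ x) (by norm_num)
        _ = 1 + C*‖g₀‖ := by ring
    rw [le_div_iff₀ h1C]
    nlinarith [norm_nonneg g₀]
  refine ⟨g₀, ⟨hnorm, hg₀⟩, ?_⟩
  rintro g ⟨-, hgfix⟩
  have hgf : F g = g := by
    ext x
    exact (hgfix x).symm
  exact hcw.fixedPoint_unique hgf
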